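/- Consider the finite abstraction product game with finite nonempty sets X̂, Q, Û, Ŵ, accepting set F ⊆ Q, δ ∈ [0,1], row-stochastic transition function T̂, and nonempty set-valued map S as in the context, and fix a Markov policy ρ = (ρ_0,…,ρ_{H−1}) for Player I over horizon H. Construct a Markov policy λ^* for Player II backwards: for n = 0,…,H−1 and each (x̂,q) with q ∉ F, letting û = ρ_{H−n−1}(x̂,q), choose λ^*_{H−n−1}(x̂,q,û) to be a maximizer over ŵ ∈ Ŵ of (1−δ)·Σ_{x̂'∈X̂} (max_{q'∈S(q,x̂')} V̲^{ρ,λ^*}_n(x̂',q'))·T̂(x̂,û,ŵ)(x̂') + δ (this is well-defined since V̲^{ρ,λ^*}_n depends only on the already-constructed stages λ^*_{H−n},…,λ^*_{H−1}). Then for every Markov policy λ for Player II over horizon H and every (x̂,q) ∈ X̂ × Q, V̲^{ρ,λ^*}_H(x̂,q) ≥ V̲^{ρ,λ}_H(x̂,q). -/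

import Mathlib

/-!
Backward induction on the number `n` of remaining stages gives `V̲^{ρ,λ}_n ≤ V̲^{ρ,λ*}_n`: the
one-stage value is monotone in the continuation (as `T̂ ≥ 0` and `δ ≤ 1`), so replacing the
continuation of `λ` by the larger one of `λ*` can only increase it, and `λ*` then maximizes it.
-/

/-- Worst-case-violation cost-to-go `V̲^{ρ,λ}_n` of the finite abstraction product game under
Markov policies `ρ` (Player I) and `λ` (Player II) over horizon `H`:
`V̲^{ρ,λ}_0(x̂,q) = 1_F(q)`; `V̲^{ρ,λ}_{n+1}(x̂,q) = 1` if `q ∈ F`, otherwise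
`V̲^{ρ,λ}_{n+1}(x̂,q) = (1−δ) Σ_{x̂'} (max_{q' ∈ S(q,x̂')} V̲^{ρ,λ}_n(x̂',q')) T̂(x̂,û,ŵ)(x̂') + δ`
with `û = ρ_{H−n−1}(x̂,q)` and `ŵ = λ_{H−n−1}(x̂,q,û)`. -/
noncomputable def VlowPol {X Q U W : Type*} [Fintype X] [DecidableEq Q]
    (F : Finset Q) (δ : ℝ) (T : X → U → W → X → ℝ) (S : Q → X → Finset Q)
    (hS : ∀ (q : Q) (x' : X), (S q x').Nonempty)
    (ρ : ℕ → X → Q → U) (lam : ℕ → X → Q → U → W) (H : ℕ) : ℕ → X → Q → ℝ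
  | 0 => fun _ q => if q ∈ F then 1 else 0
  | n + 1 => fun x q =>
      if q ∈ F then 1
      else (1 - δ) * (∑ x' : X,
        ((S q x').sup' (hS q x') fun q' => VlowPol F δ T S hS ρ lam H n x' q') *
          T x (ρ (H - n - 1) x q) (lam (H - n - 1) x q (ρ (H - n - 1) x q)) x') + δ

/-- The quantity Player II maximizes over `ŵ` in the recursion of `VlowPol`, with continuation
`V` in place of `V̲_n`. -/
noncomputable def stageValue {X Q U W : Type*} [Fintype X]
    (δ : ℝ) (T : X → U → W → X → ℝ) (S : Q → X → Finset Q)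
    (hS : ∀ (q : Q) (x' : X), (S q x').Nonempty)
    (V : X → Q → ℝ) (x : X) (q : Q) (u : U) (w : W) : ℝ :=
  (1 - δ) * (∑ x' : X, ((S q x').sup' (hS q x') fun q' => V x' q') * T x u w x') + δ

section

variable {X Q U W : Type*} [Fintype X] {δ : ℝ} (T : X → U → W → X → ℝ) (S : Q → X → Finset Q)
  (hS : ∀ (q : Q) (x' : X), (S q x').Nonempty)

theorem stageValue_mono (hδ1 : δ ≤ 1) (hT0 : ∀ (x : X) (u : U) (w : W) (x' : X), 0 ≤ T x u w x')
    {V V' : X → Q → ℝ} (hV : V ≤ V') (x : X) (q : Q) (u : U) (w : W) :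
    stageValue δ T S hS V x q u w ≤ stageValue δ T S hS V' x q u w := by
  unfold stageValue
  gcongr with x' _ q'
  · exact hT0 x u w x'
  · exact hV x' q'

theorem VlowPol_succ_of_not_mem [DecidableEq Q] (F : Finset Q) (ρ : ℕ → X → Q → U) (H : ℕ)
    (lam : ℕ → X → Q → U → W) (n : ℕ) (x : X) {q : Q} (hq : q ∉ F) :
    VlowPol F δ T S hS ρ lam H (n + 1) x q =
      stageValue δ T S hS (VlowPol F δ T S hS ρ lam H n) x q (ρ (H - n - 1) x q)
        (lam (H - n - 1) x q (ρ (H - n - 1) x q)) := by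
  simp only [VlowPol, hq, if_false, stageValue]

end

theorem worst_case_adversary_maximizes_general
    {X Q U W : Type*} [Fintype X] [DecidableEq Q]
    (F : Finset Q) (δ : ℝ) (hδ1 : δ ≤ 1)
    (T : X → U → W → X → ℝ) (S : Q → X → Finset Q)
    (hS : ∀ (q : Q) (x' : X), (S q x').Nonempty)
    (hT0 : ∀ (x : X) (u : U) (w : W) (x' : X), 0 ≤ T x u w x')
    (H : ℕ) (ρ : ℕ → X → Q → U) (lamStar : ℕ → X → Q → U → W)
    (hmax : ∀ n < H, ∀ (x : X) (q : Q), q ∉ F → ∀ w : W,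
      (1 - δ) * (∑ x' : X,
          ((S q x').sup' (hS q x') fun q' => VlowPol F δ T S hS ρ lamStar H n x' q') *
            T x (ρ (H - n - 1) x q) w x') + δ ≤
        (1 - δ) * (∑ x' : X,
          ((S q x').sup' (hS q x') fun q' => VlowPol F δ T S hS ρ lamStar H n x' q') *
            T x (ρ (H - n - 1) x q) (lamStar (H - n - 1) x q (ρ (H - n - 1) x q)) x') + δ) :
    ∀ (lam : ℕ → X → Q → U → W) (x : X) (q : Q),
      VlowPol F δ T S hS ρ lam H H x q ≤ VlowPol F δ T S hS ρ lamStar H H x q := by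
  intro lam
  suffices h : ∀ n ≤ H, VlowPol F δ T S hS ρ lam H n ≤ VlowPol F δ T S hS ρ lamStar H n from
    h H le_rfl
  intro n
  induction n with
  | zero => exact fun _ _ _ => le_rfl
  | succ n ih =>
    intro hn x q
    by_cases hq : q ∈ F
    · simp [VlowPol, hq]
    rw [VlowPol_succ_of_not_mem T S hS F ρ H lam n x hq,
      VlowPol_succ_of_not_mem T S hS F ρ H lamStar n x hq]
    exact (stageValue_mono T S hS hδ1 hT0 (ih (Nat.le_of_succ_le hn)) x q _ _).trans
      (hmax n hn x q hq _)

/-- Fix a Markov policy `ρ` for Player I over horizon `H` and a policy `λ*`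
for Player II constructed backwards so that at each backward step `n < H` and each `(x̂,q)`
with `q ∉ F` (with `û = ρ_{H−n−1}(x̂,q)`), the value
`(1−δ) Σ_{x̂'} (max_{q'∈S(q,x̂')} V̲^{ρ,λ*}_n(x̂',q')) T̂(x̂,û,λ*_{H−n−1}(x̂,q,û))(x̂') + δ`
maximizes over `ŵ ∈ Ŵ` the corresponding expression. Then for every Markov policy `λ` of
Player II and every `(x̂,q)`, `V̲^{ρ,λ*}_H(x̂,q) ≥ V̲^{ρ,λ}_H(x̂,q)`. -/
theorem worst_case_adversary_maximizes
    {X Q U W : Type*} [Fintype X] [Fintype Q] [Fintype U] [Fintype W]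
    [Nonempty X] [Nonempty Q] [Nonempty U] [Nonempty W] [DecidableEq Q]
    (F : Finset Q) (δ : ℝ) (hδ0 : 0 ≤ δ) (hδ1 : δ ≤ 1)
    (T : X → U → W → X → ℝ) (S : Q → X → Finset Q)
    (hS : ∀ (q : Q) (x' : X), (S q x').Nonempty)
    (hT0 : ∀ (x : X) (u : U) (w : W) (x' : X), 0 ≤ T x u w x')
    (hT1 : ∀ (x : X) (u : U) (w : W), ∑ x' : X, T x u w x' = 1)
    (H : ℕ) (ρ : ℕ → X → Q → U) (lamStar : ℕ → X → Q → U → W)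
    (hmax : ∀ n < H, ∀ (x : X) (q : Q), q ∉ F → ∀ w : W,
      (1 - δ) * (∑ x' : X,
          ((S q x').sup' (hS q x') fun q' => VlowPol F δ T S hS ρ lamStar H n x' q') *
            T x (ρ (H - n - 1) x q) w x') + δ ≤
        (1 - δ) * (∑ x' : X,
          ((S q x').sup' (hS q x') fun q' => VlowPol F δ T S hS ρ lamStar H n x' q') *
            T x (ρ (H - n - 1) x q) (lamStar (H - n - 1) x q (ρ (H - n - 1) x q)) x') + δ) :
    ∀ (lam : ℕ → X → Q → U → W) (x : X) (q : Q),
      VlowPol F δ T S hS ρ lam H H x q ≤ VlowPol F δ T S hS ρ lamStar H H x q :=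
  worst_case_adversary_maximizes_general F δ hδ1 T S hS hT0 H ρ lamStar hmax
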